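/- Let Σ = (N, Σ, β) be a stacky fan with Σ complete, v ∈ Box(Σ), and τ = σ(v̄) the minimal cone containing v̄. Then y^v · S_Σ is isomorphic, as an S_Σ-module, to the quotient of S_Σ by the ideal generated by all y^c such that c̄ does not lie in any cone of Σ containing τ. -/

import Mathlib

/-
Multiplication by `y^v` sends a monomial `y^c` either to `y^(v + c)` or to `0`, and the
monomials `y^(v + c)` are distinct for distinct `c`; so on `S_Σ`, which is spanned by
monomials, its kernel is spanned by the monomials `y^c` such that `bar c` shares no cone
with `bar v`. Since `τ` is the minimal cone containing `bar v`, the cones containing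
`bar v` are exactly those containing `τ`.

`S_Σ`-linearity is the associativity of the deformed product. It rests on the fact that
in a simplicial fan whose cones meet along common faces, each cone `σ` meets every other
cone `σ'` in a face of `σ`: if `x, y ∈ σ` and `x + y ∈ σ'`, then `x, y ∈ σ'`. Hence
`x`, `y` and `z` lie in a common cone iff `x, y` do and `x + y, z` do.
-/

/-- The (simplicial) cone in `V` spanned by the rays `w i`, `i ∈ S`. -/
def coneOf {V : Type} [AddCommGroup V] [Module ℚ V] {n : ℕ}
    (w : Fin n → V) (S : Finset (Fin n)) : Set V :=
  {x | ∃ q : Fin n → ℚ, (∀ i, 0 ≤ q i) ∧ (∀ i, i ∉ S → q i = 0) ∧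
    x = ∑ i, q i • w i}

/-- The multiplication of the deformed group ring `ℚ[N]^Σ`: on the ℚ-vector space
`⊕_{c ∈ N} ℚ·y^c = (N →₀ ℚ)` it is given on monomials by
`y^{c₁} · y^{c₂} = y^{c₁+c₂}` if `bar c₁` and `bar c₂` lie in a common cone of the
fan (with cones `coneOf w S`, `S ∈ Δ`), and `0` otherwise. -/
noncomputable def dmul {N V : Type} [AddCommGroup N] [AddCommGroup V] [Module ℚ V]
    {n : ℕ} (bar : N →+ V) (w : Fin n → V) (Δ : Finset (Finset (Fin n)))
    (f g : N →₀ ℚ) : N →₀ ℚ :=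
  open Classical in
  f.sum fun c₁ a => g.sum fun c₂ b =>
    if ∃ S ∈ Δ, bar c₁ ∈ coneOf w S ∧ bar c₂ ∈ coneOf w S then
      Finsupp.single (c₁ + c₂) (a * b)
    else 0


/-- `Box(Σ)`: the set of `v ∈ N` such that `bar v = ∑_{i ∈ S} q i • w i` with
`0 ≤ q i < 1` for some `d`-dimensional cone `S ∈ Δ`. -/
def BoxSet {N V : Type} [AddCommGroup N] [AddCommGroup V] [Module ℚ V] {n : ℕ}
    (bar : N →+ V) (w : Fin n → V) (Δ : Finset (Finset (Fin n))) (d : ℕ) : Set N :=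
  {v | ∃ S ∈ Δ, S.card = d ∧ ∃ q : Fin n → ℚ,
    (∀ i, 0 ≤ q i ∧ q i < 1) ∧ (∀ i, i ∉ S → q i = 0) ∧ bar v = ∑ i, q i • w i}

/-- The subring `S_Σ ⊆ ℚ[N]^Σ` generated by the monomials `y^{b i}`: its underlying
`ℚ`-vector space is spanned by the monomials `y^{∑ k i • b i}` whose support
`{i | k i ≠ 0}` lies in a cone of the fan. -/
noncomputable def SRing {N : Type} [AddCommGroup N] {n : ℕ}
    (b : Fin n → N) (Δ : Finset (Finset (Fin n))) : Submodule ℚ (N →₀ ℚ) :=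
  Submodule.span ℚ {f | ∃ k : Fin n → ℕ, (∃ S ∈ Δ, ∀ i, k i ≠ 0 → i ∈ S) ∧
    f = Finsupp.single (∑ i, k i • b i) 1}

section Cones

variable {V : Type} [AddCommGroup V] [Module ℚ V] {n : ℕ} (w : Fin n → V)

lemma coneOf_mono {S T : Finset (Fin n)} (h : T ⊆ S) : coneOf w T ⊆ coneOf w S := by
  rintro x ⟨q, hq, hq0, rfl⟩
  exact ⟨q, hq, fun i hi => hq0 i (mt (@h i) hi), rfl⟩

lemma add_mem_coneOf {S : Finset (Fin n)} {x y : V} (hx : x ∈ coneOf w S)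
    (hy : y ∈ coneOf w S) : x + y ∈ coneOf w S := by
  obtain ⟨q, hq, hq0, rfl⟩ := hx
  obtain ⟨r, hr, hr0, rfl⟩ := hy
  refine ⟨q + r, fun i => add_nonneg (hq i) (hr i), fun i hi => by simp [hq0 i hi, hr0 i hi],
    ?_⟩
  simp [add_smul, Finset.sum_add_distrib]

lemma eq_of_sum_smul_eq_of_linearIndepOn {S : Finset (Fin n)}
    (hS : LinearIndepOn ℚ w (S : Set (Fin n))) {q r : Fin n → ℚ}
    (hq : ∀ i ∉ S, q i = 0) (hr : ∀ i ∉ S, r i = 0)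
    (h : ∑ i, q i • w i = ∑ i, r i • w i) : q = r := by
  have hsum : ∑ i ∈ S, (q - r) i • w i = 0 := by
    rw [Finset.sum_subset (Finset.subset_univ S) fun i _ hi => by simp [hq i hi, hr i hi]]
    simp [sub_smul, Finset.sum_sub_distrib, h]
  funext i
  by_cases hi : i ∈ S
  · exact sub_eq_zero.mp (linearIndepOn_finset_iff.mp hS _ hsum i hi)
  · rw [hq i hi, hr i hi]

lemma mem_coneOf_of_add_mem {S S' : Finset (Fin n)}
    (hS : LinearIndepOn ℚ w (S : Set (Fin n)))
    (hglue : coneOf w S ∩ coneOf w S' = coneOf w (S ∩ S'))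
    {x y : V} (hx : x ∈ coneOf w S) (hy : y ∈ coneOf w S) (hxy : x + y ∈ coneOf w S') :
    x ∈ coneOf w S' ∧ y ∈ coneOf w S' := by
  have hmem : x + y ∈ coneOf w (S ∩ S') := hglue ▸ ⟨add_mem_coneOf w hx hy, hxy⟩
  obtain ⟨q, hq, hq0, rfl⟩ := hx
  obtain ⟨r, hr, hr0, rfl⟩ := hy
  obtain ⟨p, -, hp0, hp⟩ := hmem
  have hqr : q + r = p := by
    refine eq_of_sum_smul_eq_of_linearIndepOn w hS (fun i hi => by simp [hq0 i hi, hr0 i hi])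
      (fun i hi => hp0 i fun h => hi (Finset.mem_inter.mp h).1) ?_
    simp [← hp, add_smul, Finset.sum_add_distrib]
  have hvanish : ∀ i ∉ S', q i = 0 ∧ r i = 0 := by
    intro i hi
    have : q i + r i = 0 := by
      rw [← Pi.add_apply, hqr, hp0 i fun h => hi (Finset.mem_inter.mp h).2]
    exact ⟨by linarith [hq i, hr i], by linarith [hq i, hr i]⟩
  exact ⟨⟨q, hq, fun i hi => (hvanish i hi).1, rfl⟩,
    ⟨r, hr, fun i hi => (hvanish i hi).2, rfl⟩⟩

lemma exists_common_cone_add_iff (Δ : Finset (Finset (Fin n)))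
    (hind : ∀ S ∈ Δ, LinearIndependent ℚ fun i : S => w i.1)
    (hglue : ∀ S ∈ Δ, ∀ T ∈ Δ, coneOf w S ∩ coneOf w T = coneOf w (S ∩ T))
    (x y z : V) :
    ((∃ S ∈ Δ, x ∈ coneOf w S ∧ y ∈ coneOf w S) ∧
      ∃ S ∈ Δ, z ∈ coneOf w S ∧ x + y ∈ coneOf w S) ↔
    ∃ S ∈ Δ, x ∈ coneOf w S ∧ y ∈ coneOf w S ∧ z ∈ coneOf w S := by
  constructor
  · rintro ⟨⟨S, hS, hx, hy⟩, S', hS', hz, hxy⟩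
    obtain ⟨hx', hy'⟩ := mem_coneOf_of_add_mem w (hind S hS) (hglue S hS S' hS') hx hy hxy
    exact ⟨S', hS', hx', hy', hz⟩
  · rintro ⟨S, hS, hx, hy, hz⟩
    exact ⟨⟨S, hS, hx, hy⟩, S, hS, hz, add_mem_coneOf w hx hy⟩

lemma exists_common_cone_iff_of_minimal (Δ : Finset (Finset (Fin n))) {τ : Finset (Fin n)}
    {u : V} (huτ : u ∈ coneOf w τ) (hmin : ∀ S ∈ Δ, u ∈ coneOf w S → τ ⊆ S)
    (x : V) :
    (∃ S ∈ Δ, u ∈ coneOf w S ∧ x ∈ coneOf w S) ↔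
      ∃ S ∈ Δ, τ ⊆ S ∧ x ∈ coneOf w S := by
  constructor
  · rintro ⟨S, hS, huS, hxS⟩
    exact ⟨S, hS, hmin S hS huS, hxS⟩
  · rintro ⟨S, hS, hτS, hxS⟩
    exact ⟨S, hS, coneOf_mono w hτS huτ, hxS⟩

end Cones

section DeformedProduct

variable {N V : Type} [AddCommGroup N] [AddCommGroup V] [Module ℚ V] {n : ℕ}
  (bar : N →+ V) (w : Fin n → V) (Δ : Finset (Finset (Fin n)))

lemma dmul_zero_left (g : N →₀ ℚ) : dmul bar w Δ 0 g = 0 := by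
  simp [dmul]

lemma dmul_zero_right (f : N →₀ ℚ) : dmul bar w Δ f 0 = 0 := by
  simp [dmul]

lemma dmul_add_left (f₁ f₂ g : N →₀ ℚ) :
    dmul bar w Δ (f₁ + f₂) g = dmul bar w Δ f₁ g + dmul bar w Δ f₂ g := by
  classical
  refine Finsupp.sum_add_index' (fun c => by simp) fun c a₁ a₂ => ?_
  rw [← Finsupp.sum_add]
  refine Finsupp.sum_congr fun c₂ _ => ?_
  split_ifs <;> simp [add_mul, Finsupp.single_add]

lemma dmul_add_right (f g₁ g₂ : N →₀ ℚ) :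
    dmul bar w Δ f (g₁ + g₂) = dmul bar w Δ f g₁ + dmul bar w Δ f g₂ := by
  classical
  rw [dmul, dmul, dmul, ← Finsupp.sum_add]
  refine Finsupp.sum_congr fun c₁ _ => Finsupp.sum_add_index' (fun c => ?_) fun c b₁ b₂ => ?_
  · split_ifs <;> simp
  · split_ifs <;> simp [mul_add, Finsupp.single_add]

open Classical in
lemma dmul_single_single (c₁ c₂ : N) (a b : ℚ) :
    dmul bar w Δ (Finsupp.single c₁ a) (Finsupp.single c₂ b) =
      if ∃ S ∈ Δ, bar c₁ ∈ coneOf w S ∧ bar c₂ ∈ coneOf w S then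
        Finsupp.single (c₁ + c₂) (a * b)
      else 0 := by
  rw [dmul, Finsupp.sum_single_index (by simp), Finsupp.sum_single_index (by split_ifs <;> simp)]

open Classical in
lemma dmul_single_one_apply_add (v : N) (s : N →₀ ℚ) (c : N) :
    dmul bar w Δ (Finsupp.single v 1) s (v + c) =
      if ∃ S ∈ Δ, bar v ∈ coneOf w S ∧ bar c ∈ coneOf w S then s c else 0 := by
  rw [dmul, Finsupp.sum_single_index (by simp), Finsupp.sum_apply, Finsupp.sum,
    Finset.sum_eq_single c]
  · split_ifs <;> simp
  · intro c' _ hne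
    split_ifs <;> simp [hne]
  · intro hc
    split_ifs <;> simp [Finsupp.notMem_support_iff.mp hc]

lemma dmul_single_one_eq_zero_iff (v : N) (s : N →₀ ℚ) :
    dmul bar w Δ (Finsupp.single v 1) s = 0 ↔
      ∀ c ∈ s.support, ¬ ∃ S ∈ Δ, bar v ∈ coneOf w S ∧ bar c ∈ coneOf w S := by
  classical
  constructor
  · intro h c hc hcommon
    have hcoeff := DFunLike.congr_fun h (v + c)
    rw [dmul_single_one_apply_add, if_pos hcommon] at hcoeff
    exact Finsupp.mem_support_iff.mp hc hcoeff
  · intro h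
    rw [dmul, Finsupp.sum_single_index (by simp)]
    exact Finset.sum_eq_zero fun c hc => if_neg (h c hc)

open Classical in
lemma dmul_single_dmul_single_single
    (hind : ∀ S ∈ Δ, LinearIndependent ℚ fun i : S => w i.1)
    (hglue : ∀ S ∈ Δ, ∀ T ∈ Δ, coneOf w S ∩ coneOf w T = coneOf w (S ∩ T))
    (c₁ c₂ c₃ : N) (a₁ a₂ a₃ : ℚ) :
    dmul bar w Δ (Finsupp.single c₁ a₁)
        (dmul bar w Δ (Finsupp.single c₂ a₂) (Finsupp.single c₃ a₃)) =
      if ∃ S ∈ Δ, bar c₂ ∈ coneOf w S ∧ bar c₃ ∈ coneOf w S ∧ bar c₁ ∈ coneOf w S then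
        Finsupp.single (c₁ + (c₂ + c₃)) (a₁ * (a₂ * a₃))
      else 0 := by
  rw [dmul_single_single, apply_ite (dmul bar w Δ _), dmul_single_single, dmul_zero_right,
    ← ite_and, map_add]
  exact if_congr (exists_common_cone_add_iff w Δ hind hglue _ _ _) rfl rfl

lemma dmul_left_comm_single (hind : ∀ S ∈ Δ, LinearIndependent ℚ fun i : S => w i.1)
    (hglue : ∀ S ∈ Δ, ∀ T ∈ Δ, coneOf w S ∩ coneOf w T = coneOf w (S ∩ T))
    (v c₁ c₂ : N) (a b : ℚ) :
    dmul bar w Δ (Finsupp.single c₁ a)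
        (dmul bar w Δ (Finsupp.single v 1) (Finsupp.single c₂ b)) =
      dmul bar w Δ (Finsupp.single v 1)
        (dmul bar w Δ (Finsupp.single c₁ a) (Finsupp.single c₂ b)) := by
  classical
  rw [dmul_single_dmul_single_single bar w Δ hind hglue,
    dmul_single_dmul_single_single bar w Δ hind hglue]
  refine if_congr (exists_congr fun S => by tauto) ?_ rfl
  rw [add_left_comm, one_mul, one_mul]

lemma dmul_left_comm_single_one (hind : ∀ S ∈ Δ, LinearIndependent ℚ fun i : S => w i.1)
    (hglue : ∀ S ∈ Δ, ∀ T ∈ Δ, coneOf w S ∩ coneOf w T = coneOf w (S ∩ T))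
    (v : N) (t s : N →₀ ℚ) :
    dmul bar w Δ t (dmul bar w Δ (Finsupp.single v 1) s) =
      dmul bar w Δ (Finsupp.single v 1) (dmul bar w Δ t s) := by
  induction t using Finsupp.induction_linear with
  | zero => rw [dmul_zero_left, dmul_zero_left, dmul_zero_right]
  | add t₁ t₂ h₁ h₂ => rw [dmul_add_left, dmul_add_left, h₁, h₂, dmul_add_right]
  | single c₁ a =>
    induction s using Finsupp.induction_linear with
    | zero => simp only [dmul_zero_right]
    | add s₁ s₂ h₁ h₂ =>
      rw [dmul_add_right, dmul_add_right, h₁, h₂, dmul_add_right, dmul_add_right]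
    | single c₂ b => exact dmul_left_comm_single bar w Δ hind hglue v c₁ c₂ a b

end DeformedProduct

lemma span_single_one_eq_supported {ι N R : Type} [Semiring R] (p : ι → Prop) (g : ι → N) :
    Submodule.span R {f : N →₀ R | ∃ k, p k ∧ f = Finsupp.single (g k) 1} =
      Finsupp.supported R R (g '' {k | p k}) := by
  rw [Finsupp.supported_eq_span_single, Set.image_image]
  congr 1
  ext f
  simp [eq_comm]

lemma span_single_one_filter_eq_supported {ι N R : Type} [Semiring R] (p : ι → Prop)
    (q : N → Prop) (g : ι → N) :
    Submodule.span R {f : N →₀ R | ∃ k, p k ∧ q (g k) ∧ f = Finsupp.single (g k) 1} =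
      Finsupp.supported R R (g '' {k | p k} ∩ {c | q c}) := by
  simp only [← and_assoc]
  rw [span_single_one_eq_supported, ← Set.image_inter_preimage]
  rfl

theorem stmt_15_general (N V : Type) [AddCommGroup N] [AddCommGroup V] [Module ℚ V]
    (n : ℕ) (bar : N →+ V) (b : Fin n → N) (w : Fin n → V)
    (Δ : Finset (Finset (Fin n)))
    (hind : ∀ S ∈ Δ, LinearIndependent ℚ fun i : S => w i.1)
    (hglue : ∀ S ∈ Δ, ∀ T ∈ Δ, coneOf w S ∩ coneOf w T = coneOf w (S ∩ T))
    (v : N)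
    (τ : Finset (Fin n))
    (hvτ : bar v ∈ coneOf w τ)
    (hmin : ∀ S ∈ Δ, bar v ∈ coneOf w S → τ ⊆ S) :
    (∀ s ∈ SRing b Δ,
      (dmul bar w Δ (Finsupp.single v 1) s = 0 ↔
        s ∈ Submodule.span ℚ {f : N →₀ ℚ | ∃ k : Fin n → ℕ,
          (∃ S ∈ Δ, ∀ i, k i ≠ 0 → i ∈ S) ∧
          (¬ ∃ S ∈ Δ, τ ⊆ S ∧ bar (∑ i, k i • b i) ∈ coneOf w S) ∧
          f = Finsupp.single (∑ i, k i • b i) 1})) ∧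
    (∀ t ∈ SRing b Δ, ∀ s ∈ SRing b Δ,
      dmul bar w Δ t (dmul bar w Δ (Finsupp.single v 1) s) =
        dmul bar w Δ (Finsupp.single v 1) (dmul bar w Δ t s)) := by
  refine ⟨fun s hs => ?_, fun t _ s _ => dmul_left_comm_single_one bar w Δ hind hglue v t s⟩
  rw [SRing, span_single_one_eq_supported, Finsupp.mem_supported] at hs
  rw [span_single_one_filter_eq_supported
      (q := fun c => ¬ ∃ S ∈ Δ, τ ⊆ S ∧ bar c ∈ coneOf w S),
    Finsupp.mem_supported, Set.subset_inter_iff, dmul_single_one_eq_zero_iff]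
  simp only [exists_common_cone_iff_of_minimal w Δ hvτ hmin, hs, true_and]
  rfl

/-- **The summand `y^v · S_Σ` of the deformed group ring.**  Let `Σ` be a complete
simplicial fan with rays `w i = bar (b i)`, let `v ∈ Box(Σ)` and let `τ ∈ Δ` be the
minimal cone containing `bar v`.  Then multiplication by `y^v` maps `S_Σ` onto
`y^v · S_Σ` with kernel exactly the ideal `J` of `S_Σ` spanned by the monomials `y^c`
such that `bar c` does not lie in any cone of `Σ` containing `τ`; i.e. `y^v · S_Σ` is
isomorphic, as an `S_Σ`-module, to `S_Σ/J` (the map being `S_Σ`-linear). -/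
theorem stmt_15 (N V : Type) [AddCommGroup N] [AddCommGroup V] [Module ℚ V]
    (n d : ℕ) (bar : N →+ V) (b : Fin n → N) (w : Fin n → V)
    (hw : w = fun i => bar (b i))
    (Δ : Finset (Finset (Fin n)))
    (hind : ∀ S ∈ Δ, LinearIndependent ℚ fun i : S => w i.1)
    (hdown : ∀ S ∈ Δ, ∀ T ⊆ S, T ∈ Δ)
    (hglue : ∀ S ∈ Δ, ∀ T ∈ Δ, coneOf w S ∩ coneOf w T = coneOf w (S ∩ T))
    (hcomplete : ∀ x : V, ∃ S ∈ Δ, x ∈ coneOf w S)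
    (v : N) (hv : v ∈ BoxSet bar w Δ d)
    (τ : Finset (Fin n)) (hτ : τ ∈ Δ)
    (hvτ : bar v ∈ coneOf w τ)
    (hmin : ∀ S ∈ Δ, bar v ∈ coneOf w S → τ ⊆ S) :
    (∀ s ∈ SRing b Δ,
      (dmul bar w Δ (Finsupp.single v 1) s = 0 ↔
        s ∈ Submodule.span ℚ {f : N →₀ ℚ | ∃ k : Fin n → ℕ,
          (∃ S ∈ Δ, ∀ i, k i ≠ 0 → i ∈ S) ∧
          (¬ ∃ S ∈ Δ, τ ⊆ S ∧ bar (∑ i, k i • b i) ∈ coneOf w S) ∧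
          f = Finsupp.single (∑ i, k i • b i) 1})) ∧
    (∀ t ∈ SRing b Δ, ∀ s ∈ SRing b Δ,
      dmul bar w Δ t (dmul bar w Δ (Finsupp.single v 1) s) =
        dmul bar w Δ (Finsupp.single v 1) (dmul bar w Δ t s)) :=
  stmt_15_general N V n bar b w Δ hind hglue v τ hvτ hmin
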